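/- arXiv:2309.02982 — 4 statements merged into one kernel-verified Lean document; each statement's English description precedes it below -/
import Mathlib

section
/- With f₁ and f₂ as in the context (for any choice of the scalars α₁, α'_1, …, α'_n, β_1, …, β_m), the quotient ring ℂ[a,b,x,y]/(f₁, f₂) is nonzero; equivalently, the ideal generated by f₁ and f₂ is a proper ideal of ℂ[a,b,x,y]. -/
/-!
The ideal is proper because `f₁` and `f₂` have a common complex zero. Writing `P` and `Q` for the
two products, choose `t` with `P t ≠ 0` and put `s = t + α₁`; then any point with `ab = t` and
`xy = s` is a zero of `f₁`, and `f₂` vanishes there as soon as `a · P t = 1 + x · Q s`. Taking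
`x ≠ 0` with `1 + x · Q s ≠ 0` makes the required `a` nonzero, so `b = t / a` and `y = s / x` solve
the system.
-/

open MvPolynomial

theorem MvPolynomial.nontrivial_quotient_span_of_forall_eval_eq_zero {σ R : Type*} [CommRing R]
    [Nontrivial R] {S : Set (MvPolynomial σ R)} (v : σ → R) (hS : ∀ f ∈ S, eval v f = 0) :
    Nontrivial (MvPolynomial σ R ⧸ Ideal.span S) :=
  Ideal.Quotient.nontrivial_iff.mpr <|
    ne_top_of_le_ne_top (RingHom.ker_ne_top (eval v)) (Ideal.span_le.mpr hS)

section CommonZero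

variable {K : Type*} [Field K]

lemma exists_ne_zero_one_add_mul_ne_zero [NeZero (2 : K)] (c : K) :
    ∃ x : K, x ≠ 0 ∧ 1 + x * c ≠ 0 := by
  by_cases hc : 1 + c = 0
  · refine ⟨2, two_ne_zero, fun h ↦ one_ne_zero (α := K) ?_⟩
    linear_combination 2 * hc - h
  · exact ⟨1, one_ne_zero, by rwa [one_mul]⟩

lemma exists_mul_sub_mul_add_eq_zero_and_one_sub_add_eq_zero [NeZero (2 : K)] (p q : K → K)
    (α₁ t : K) (ht : p t ≠ 0) :
    ∃ a b x y : K, a * b - x * y + α₁ = 0 ∧ 1 - a * p (a * b) + x * q (x * y) = 0 := by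
  set s := t + α₁
  obtain ⟨x, hx, hc⟩ := exists_ne_zero_one_add_mul_ne_zero (q s)
  set a := (1 + x * q s) / p t
  have ha : a ≠ 0 := div_ne_zero hc ht
  have hab : a * (t / a) = t := mul_div_cancel₀ t ha
  have hxy : x * (s / x) = s := mul_div_cancel₀ s hx
  refine ⟨a, t / a, x, s / x, ?_, ?_⟩
  · rw [hab, hxy]
    ring
  · rw [hab, hxy, div_mul_cancel₀ _ ht]
    ring

end CommonZero

/-- In `ℂ[a,b,x,y]` (variables `X 0 = a`, `X 1 = b`, `X 2 = x`, `X 3 = y`), with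
`f₁ = ab - xy + α₁` and `f₂ = 1 - a·(ab - α'₁)⋯(ab - α'ₙ) + x·(xy - β₁)⋯(xy - βₘ)`,
the quotient ring `ℂ[a,b,x,y]/(f₁, f₂)` is nonzero. -/
theorem stmt_4 (n m : ℕ) (α₁ : ℂ) (α' : Fin n → ℂ) (β : Fin m → ℂ)
    (f₁ f₂ : MvPolynomial (Fin 4) ℂ)
    (hf₁ : f₁ = X 0 * X 1 - X 2 * X 3 + C α₁)
    (hf₂ : f₂ = 1 - X 0 * ∏ i, (X 0 * X 1 - C (α' i))
        + X 2 * ∏ j, (X 2 * X 3 - C (β j))) :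
    Nontrivial (MvPolynomial (Fin 4) ℂ ⧸ Ideal.span {f₁, f₂}) := by
  obtain ⟨t, ht⟩ := (Set.finite_range α').exists_notMem
  have hPt : ∏ i, (t - α' i) ≠ 0 :=
    Finset.prod_ne_zero_iff.mpr fun i _ ↦ sub_ne_zero.mpr fun h ↦ ht ⟨i, h.symm⟩
  obtain ⟨a, b, x, y, h₁, h₂⟩ := exists_mul_sub_mul_add_eq_zero_and_one_sub_add_eq_zero
    (fun u ↦ ∏ i, (u - α' i)) (fun u ↦ ∏ j, (u - β j)) α₁ t hPt
  refine nontrivial_quotient_span_of_forall_eval_eq_zero ![a, b, x, y] ?_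
  rintro f (rfl | rfl)
  · simpa [hf₁] using h₁
  · simpa [hf₂] using h₂
end

section
/- With f₁ and f₂ as in the context (for any choice of the scalars α₁, α'_1, …, α'_n, β_1, …, β_m), let J be the ideal of ℂ[a,b,x,y] generated by f₁, f₂, and all 2×2 minors of the Jacobian matrix of (f₁, f₂), i.e. all elements (∂f₁/∂v)·(∂f₂/∂w) − (∂f₁/∂w)·(∂f₂/∂v) for v, w ranging over the variables a, b, x, y. Then J is the unit ideal (it contains 1). -/
/-!
Write `P = ∏ (ab - α'ᵢ)` and `Q = ∏ (xy - βⱼ)`. On a polynomial in the product `uv` the operators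
`v ∂ᵥ` and `u ∂ᵤ` agree, so the Jacobian minor of `(f₁, f₂)` in `(a, b)` collapses to `aP` and the
one in `(x, y)` to `xQ`. Hence `1 = f₂ + aP - xQ` lies in the ideal.
-/

open MvPolynomial

namespace MvPolynomial

variable {R σ : Type*} [CommRing R]

noncomputable def jacobianMinor (u v : σ) (f g : MvPolynomial σ R) : MvPolynomial σ R :=
  pderiv u f * pderiv v g - pderiv v f * pderiv u g

theorem jacobianMinor_neg_neg (u v : σ) (f g : MvPolynomial σ R) :
    jacobianMinor u v (-f) (-g) = jacobianMinor u v f g := by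
  simp only [jacobianMinor, map_neg]; ring

theorem jacobianMinor_X_mul_X_add_sub_X_mul_aeval {u v : σ} (huv : u ≠ v) (p : Polynomial R)
    {r s : MvPolynomial σ R} (hru : pderiv u r = 0) (hrv : pderiv v r = 0)
    (hsu : pderiv u s = 0) (hsv : pderiv v s = 0) :
    jacobianMinor u v (X u * X v + r) (s - X u * Polynomial.aeval (X u * X v) p) =
      X u * Polynomial.aeval (X u * X v) p := by
  simp only [jacobianMinor, map_add, map_sub, Derivation.leibniz, Derivation.map_aeval,
    pderiv_X_self, pderiv_X_of_ne huv, pderiv_X_of_ne huv.symm, hru, hrv, hsu, hsv, smul_eq_mul]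
  ring

end MvPolynomial

/-- With `f₁ = ab - xy + α₁` and
`f₂ = 1 - a·(ab - α'₁)⋯(ab - α'ₙ) + x·(xy - β₁)⋯(xy - βₘ)` in `ℂ[a,b,x,y]`
(variables `X 0 = a`, `X 1 = b`, `X 2 = x`, `X 3 = y`), the ideal generated by
`f₁`, `f₂` and all `2×2` minors of the Jacobian matrix of `(f₁, f₂)` is the unit ideal. -/
theorem stmt_7 (n m : ℕ) (α₁ : ℂ) (α' : Fin n → ℂ) (β : Fin m → ℂ)
    (f₁ f₂ : MvPolynomial (Fin 4) ℂ)
    (hf₁ : f₁ = X 0 * X 1 - X 2 * X 3 + C α₁)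
    (hf₂ : f₂ = 1 - X 0 * ∏ i, (X 0 * X 1 - C (α' i))
        + X 2 * ∏ j, (X 2 * X 3 - C (β j))) :
    Ideal.span ({f₁, f₂} ∪ Set.range fun vw : Fin 4 × Fin 4 =>
      pderiv vw.1 f₁ * pderiv vw.2 f₂ - pderiv vw.2 f₁ * pderiv vw.1 f₂) = ⊤ := by
  obtain ⟨p, hp⟩ : ∃ p : Polynomial ℂ,
      ∏ i, (X 0 * X 1 - C (α' i) : MvPolynomial (Fin 4) ℂ) = Polynomial.aeval (X 0 * X 1) p :=
    ⟨∏ i, (Polynomial.X - Polynomial.C (α' i)), by simp [map_prod]⟩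
  obtain ⟨q, hq⟩ : ∃ q : Polynomial ℂ,
      ∏ j, (X 2 * X 3 - C (β j) : MvPolynomial (Fin 4) ℂ) = Polynomial.aeval (X 2 * X 3) q :=
    ⟨∏ j, (Polynomial.X - Polynomial.C (β j)), by simp [map_prod]⟩
  rw [hp, hq] at hf₂
  have hab : jacobianMinor 0 1 f₁ f₂ = X 0 * Polynomial.aeval (X 0 * X 1) p := by
    rw [← jacobianMinor_X_mul_X_add_sub_X_mul_aeval (by decide) p
      (r := C α₁ - X 2 * X 3) (s := 1 + X 2 * Polynomial.aeval (X 2 * X 3) q)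
      (by simp) (by simp) (by simp) (by simp), hf₁, hf₂]
    congr 1 <;> ring
  have hxy : jacobianMinor 2 3 f₁ f₂ = X 2 * Polynomial.aeval (X 2 * X 3) q := by
    rw [← jacobianMinor_X_mul_X_add_sub_X_mul_aeval (by decide) q
      (r := -(X 0 * X 1) - C α₁) (s := X 0 * Polynomial.aeval (X 0 * X 1) p - 1)
      (by simp) (by simp) (by simp) (by simp), ← jacobianMinor_neg_neg, hf₁, hf₂]
    congr 1 <;> ring
  have hone : 1 = f₂ + jacobianMinor 0 1 f₁ f₂ - jacobianMinor 2 3 f₁ f₂ := by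
    rw [hab, hxy, hf₂]; ring
  rw [Ideal.eq_top_iff_one, hone]
  exact sub_mem (add_mem (Ideal.subset_span (.inl (.inr rfl)))
    (Ideal.subset_span (.inr ⟨(0, 1), rfl⟩))) (Ideal.subset_span (.inr ⟨(2, 3), rfl⟩))
end

section
/- With notation as in the context, let C ⊂ R be the set of images of the elements d_{k,i}·u_{k,i} (for all k ∈ {1,2,3} and 1 ≤ i ≤ p_k), i.e. the two-cycles. Then the three ℂ-subalgebras of R generated respectively by C ∪ {images of D_kU_l for all k, l ∈ {1,2,3}}, by C ∪ {images of D_1U_2, D_1U_3, D_2U_1, D_2U_3}, and by C ∪ {images of D_1U_2, D_2U_1, D_2U_3}, all coincide. -/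
open MvPolynomial

/-- The index type of the arrow variables: `Sum.inl ⟨k, i⟩` is the downward arrow
`d_{k,i+1}` and `Sum.inr ⟨k, i⟩` is the upward arrow `u_{k,i+1}` (arm `k`, `i : Fin (p k)`). -/
abbrev ReconArrows (p : Fin 3 → ℕ) : Type := (Σ k : Fin 3, Fin (p k)) ⊕ (Σ k : Fin 3, Fin (p k))

/-- The polynomial ring `P = ℂ[d_{k,i}, u_{k,i}]`. -/
abbrev ReconP (p : Fin 3 → ℕ) : Type := MvPolynomial (ReconArrows p) ℂ

/-- `D_k = d_{k,1}⋯d_{k,p_k}`. -/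
noncomputable def ReconD (p : Fin 3 → ℕ) (k : Fin 3) : ReconP p :=
  ∏ i : Fin (p k), X (Sum.inl ⟨k, i⟩)

/-- `U_k = u_{k,1}⋯u_{k,p_k}`. -/
noncomputable def ReconU (p : Fin 3 → ℕ) (k : Fin 3) : ReconP p :=
  ∏ i : Fin (p k), X (Sum.inr ⟨k, i⟩)

/-- The quotient `R = P/(D₁ - D₂ + D₃)` by the canonical relation. -/
abbrev ReconR (p : Fin 3 → ℕ) : Type :=
  ReconP p ⧸ Ideal.span {ReconD p 0 - ReconD p 1 + ReconD p 2}

/-- The quotient algebra map `π : P → R`. -/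
noncomputable def ReconPi (p : Fin 3 → ℕ) : ReconP p →ₐ[ℂ] ReconR p :=
  Ideal.Quotient.mkₐ ℂ _

/-- The set `C` of (images in `R` of) the two-cycles `d_{k,i}·u_{k,i}`. -/
noncomputable def ReconTwoCycles (p : Fin 3 → ℕ) : Set (ReconR p) :=
  Set.range fun ki : Σ k : Fin 3, Fin (p k) =>
    ReconPi p (X (Sum.inl ki) * X (Sum.inr ki))

/-! The diagonal cycles `D_kU_k` are products of two-cycles, and multiplying the relation
`D₁ = D₀ + D₂` (arms indexed from `0`) by `U_l` expresses each `D_kU_l` through the others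
in its column `l`. Starting from the diagonal and `D₀U₁, D₁U₀, D₁U₂`, this yields
`D₀U₂ = D₁U₂ - D₂U₂`, `D₂U₀ = D₁U₀ - D₀U₀` and `D₂U₁ = D₁U₁ - D₀U₁`. -/

theorem mul_mem_of_sub_add_eq_zero {A S : Type*} [Ring A] [SetLike S A] [AddSubgroupClass S A]
    (s : S) {D U : Fin 3 → A} (hrel : D 0 - D 1 + D 2 = 0) (hdiag : ∀ k, D k * U k ∈ s)
    (h01 : D 0 * U 1 ∈ s) (h10 : D 1 * U 0 ∈ s) (h12 : D 1 * U 2 ∈ s) (k l : Fin 3) :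
    D k * U l ∈ s := by
  have hD : D 1 = D 0 + D 2 := by
    rw [← sub_eq_zero, ← neg_eq_zero, ← hrel]
    abel
  have mem_zero : ∀ l, D 1 * U l ∈ s → D 2 * U l ∈ s → D 0 * U l ∈ s := fun l h1 h2 => by
    simpa [hD, add_mul] using sub_mem h1 h2
  have mem_two : ∀ l, D 1 * U l ∈ s → D 0 * U l ∈ s → D 2 * U l ∈ s := fun l h1 h0 => by
    simpa [hD, add_mul] using sub_mem h1 h0
  fin_cases k <;> fin_cases l
  · exact hdiag 0
  · exact h01
  · exact mem_zero 2 h12 (hdiag 2)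
  · exact h10
  · exact hdiag 1
  · exact h12
  · exact mem_two 0 h10 (hdiag 0)
  · exact mem_two 1 (hdiag 1) h01
  · exact hdiag 2

theorem Algebra.adjoin_eq_and_adjoin_eq_of_subset_of_subset {R A : Type*} [CommSemiring R]
    [Semiring A] [Algebra R A] {s₁ s₂ s₃ : Set A} (h₃₂ : s₃ ⊆ s₂) (h₂₁ : s₂ ⊆ s₁)
    (h₁ : s₁ ⊆ Algebra.adjoin R s₃) :
    Algebra.adjoin R s₁ = Algebra.adjoin R s₂ ∧ Algebra.adjoin R s₁ = Algebra.adjoin R s₃ := by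
  have h₁₃ : Algebra.adjoin R s₁ ≤ Algebra.adjoin R s₃ := Algebra.adjoin_le h₁
  exact ⟨le_antisymm (h₁₃.trans (Algebra.adjoin_mono h₃₂)) (Algebra.adjoin_mono h₂₁),
    le_antisymm h₁₃ (Algebra.adjoin_mono (h₃₂.trans h₂₁))⟩

theorem reconPi_reconD_relation (p : Fin 3 → ℕ) :
    ReconPi p (ReconD p 0) - ReconPi p (ReconD p 1) + ReconPi p (ReconD p 2) = 0 := by
  rw [← map_sub, ← map_add]
  exact Ideal.Quotient.eq_zero_iff_mem.mpr (Ideal.subset_span rfl)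

theorem reconPi_reconD_mul_reconU_self_mem_adjoin (p : Fin 3 → ℕ) (k : Fin 3) :
    ReconPi p (ReconD p k * ReconU p k) ∈ Algebra.adjoin ℂ (ReconTwoCycles p) := by
  simp only [ReconD, ReconU]
  rw [← Finset.prod_mul_distrib, map_prod]
  exact Subalgebra.prod_mem _ fun i _ => Algebra.subset_adjoin ⟨⟨k, i⟩, rfl⟩

theorem stmt_10_general (p : Fin 3 → ℕ) :
    Algebra.adjoin ℂ (ReconTwoCycles p ∪
        Set.range fun kl : Fin 3 × Fin 3 => ReconPi p (ReconD p kl.1 * ReconU p kl.2)) =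
      Algebra.adjoin ℂ (ReconTwoCycles p ∪
        {ReconPi p (ReconD p 0 * ReconU p 1), ReconPi p (ReconD p 0 * ReconU p 2),
         ReconPi p (ReconD p 1 * ReconU p 0), ReconPi p (ReconD p 1 * ReconU p 2)}) ∧
    Algebra.adjoin ℂ (ReconTwoCycles p ∪
        Set.range fun kl : Fin 3 × Fin 3 => ReconPi p (ReconD p kl.1 * ReconU p kl.2)) =
      Algebra.adjoin ℂ (ReconTwoCycles p ∪
        {ReconPi p (ReconD p 0 * ReconU p 1), ReconPi p (ReconD p 1 * ReconU p 0),
         ReconPi p (ReconD p 1 * ReconU p 2)}) := by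
  refine Algebra.adjoin_eq_and_adjoin_eq_of_subset_of_subset
    (Set.union_subset_union_right _ ?_) (Set.union_subset_union_right _ ?_) ?_
  · rintro _ (rfl | rfl | rfl)
    exacts [Or.inl rfl, Or.inr (Or.inr (Or.inl rfl)), Or.inr (Or.inr (Or.inr rfl))]
  · rintro _ (rfl | rfl | rfl | rfl)
    exacts [⟨(0, 1), rfl⟩, ⟨(0, 2), rfl⟩, ⟨(1, 0), rfl⟩, ⟨(1, 2), rfl⟩]
  rintro _ (hC | ⟨⟨k, l⟩, rfl⟩)
  · exact Algebra.subset_adjoin (Or.inl hC)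
  rw [map_mul]
  refine mul_mem_of_sub_add_eq_zero (D := fun k => ReconPi p (ReconD p k))
    (U := fun l => ReconPi p (ReconU p l)) _ (reconPi_reconD_relation p) (fun k => ?_)
    ?_ ?_ ?_ k l
  all_goals rw [← map_mul]
  · exact Algebra.adjoin_mono Set.subset_union_left
      (reconPi_reconD_mul_reconU_self_mem_adjoin p k)
  exacts [Algebra.subset_adjoin (Or.inr (Or.inl rfl)),
    Algebra.subset_adjoin (Or.inr (Or.inr (Or.inl rfl))),
    Algebra.subset_adjoin (Or.inr (Or.inr (Or.inr rfl)))]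

/-- `⟨S₃⟩ = ⟨S₂⟩ = ⟨S₁⟩`: the ℂ-subalgebras of `R = P/(D₁ - D₂ + D₃)` generated by the
two-cycles together with (1) all cycles `D_kU_l`, (2) the cycles
`D₁U₂, D₁U₃, D₂U₁, D₂U₃`, and (3) the cycles `D₁U₂, D₂U₁, D₂U₃`, all coincide.
(Here arm `k ∈ {1,2,3}` of the paper corresponds to `k ∈ Fin 3 = {0,1,2}`.) -/
theorem stmt_10 (p : Fin 3 → ℕ) (hp : ∀ k, 0 < p k) :
    Algebra.adjoin ℂ (ReconTwoCycles p ∪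
        Set.range fun kl : Fin 3 × Fin 3 => ReconPi p (ReconD p kl.1 * ReconU p kl.2)) =
      Algebra.adjoin ℂ (ReconTwoCycles p ∪
        {ReconPi p (ReconD p 0 * ReconU p 1), ReconPi p (ReconD p 0 * ReconU p 2),
         ReconPi p (ReconD p 1 * ReconU p 0), ReconPi p (ReconD p 1 * ReconU p 2)}) ∧
    Algebra.adjoin ℂ (ReconTwoCycles p ∪
        Set.range fun kl : Fin 3 × Fin 3 => ReconPi p (ReconD p kl.1 * ReconU p kl.2)) =
      Algebra.adjoin ℂ (ReconTwoCycles p ∪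
        {ReconPi p (ReconD p 0 * ReconU p 1), ReconPi p (ReconD p 1 * ReconU p 0),
         ReconPi p (ReconD p 1 * ReconU p 2)}) :=
  stmt_10_general p
end

section
/- Let V and E be finite types, s, t : E → V functions, and m : E → ℕ. Suppose that for every function μ : V → ℂˣ into the multiplicative group of nonzero complex numbers, ∏_{e ∈ E} ((μ(s(e)))⁻¹ · μ(t(e)))^{m(e)} = 1. Then for every v ∈ V, Σ_{e : s(e) = v} m(e) = Σ_{e : t(e) = v} m(e). -/
/-!
Evaluate the invariant monomial at the torus element that is `g` at the vertex `v` and `1`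
elsewhere: an arrow leaving `v` contributes `g⁻¹`, an arrow arriving at `v` contributes `g`, and
a loop at `v` contributes both. The monomial thus becomes `g ^ (in - out)`, which is `1` only if
`in = out` as soon as `g` has infinite order, e.g. `g = 2` in `ℂˣ`.
-/

open Finset

section TorusAction

variable {V E G : Type*} [Fintype E] [DecidableEq V] [CommGroup G]

theorem prod_inv_mul_mulSingle_pow (s t : E → V) (m : E → ℕ) (v : V) (g : G) :
    let μ : V → G := Pi.mulSingle v g
    ∏ e, ((μ (s e))⁻¹ * μ (t e)) ^ m e =
      (g ^ ∑ e with s e = v, m e)⁻¹ * g ^ ∑ e with t e = v, m e := by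
  intro μ
  have hpow : ∀ w : V, ∀ n : ℕ,
      μ w ^ n = g ^ (if w = v then n else 0) := by
    intro w n
    by_cases hw : w = v <;> simp [μ, hw]
  simp only [mul_pow, inv_pow, hpow, prod_mul_distrib, prod_inv_distrib, prod_pow_eq_pow_sum,
    sum_filter]

theorem sum_filter_source_eq_sum_filter_target {g : G} (hg : ¬IsOfFinOrder g)
    (s t : E → V) (m : E → ℕ) (h : ∀ μ : V → G, ∏ e, ((μ (s e))⁻¹ * μ (t e)) ^ m e = 1)
    (v : V) : ∑ e with s e = v, m e = ∑ e with t e = v, m e := by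
  have hv := h (Pi.mulSingle v g)
  rw [prod_inv_mul_mulSingle_pow, inv_mul_eq_one] at hv
  exact injective_pow_iff_not_isOfFinOrder.mpr hg hv

end TorusAction

theorem Complex.not_isOfFinOrder_two : ¬IsOfFinOrder (Units.mk0 (2 : ℂ) two_ne_zero) := by
  intro h
  have hnorm := ((Units.coeHom ℂ).isOfFinOrder h).norm_eq_one
  norm_num at hnorm

theorem stmt_13_general (V E : Type*) [Fintype E] [DecidableEq V]
    (s t : E → V) (m : E → ℕ)
    (h : ∀ μ : V → ℂˣ, ∏ e : E, ((μ (s e))⁻¹ * μ (t e)) ^ m e = 1) :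
    ∀ v : V, ∑ e ∈ Finset.univ.filter (fun e => s e = v), m e =
      ∑ e ∈ Finset.univ.filter (fun e => t e = v), m e :=
  sum_filter_source_eq_sum_filter_target Complex.not_isOfFinOrder_two s t m h

/-- If a monomial `∏ x_e^{m(e)}` in the arrow variables of a quiver is invariant under
the conjugation torus action, then at every vertex the number of arrows leaving equals
the number of arrows arriving (counted with multiplicity `m`). -/
theorem stmt_13 (V E : Type*) [Fintype V] [Fintype E] [DecidableEq V]
    (s t : E → V) (m : E → ℕ)
    (h : ∀ μ : V → ℂˣ, ∏ e : E, ((μ (s e))⁻¹ * μ (t e)) ^ m e = 1) :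
    ∀ v : V, ∑ e ∈ Finset.univ.filter (fun e => s e = v), m e =
      ∑ e ∈ Finset.univ.filter (fun e => t e = v), m e :=
  stmt_13_general V E s t m h
end
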